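/- Suppose h : ℝ² → ℝ is C¹ and x is a boundary point of two open sets A₁, A₂ partitioning a neighborhood V of x, separated by a C¹ curve through x with normal N. If -∇h(y)·N > 0 for all y ∈ A₂ ∩ V and -∇h(y)·N < 0 for all y ∈ A₁ ∩ V, then ∇h(x)·N = 0 and x is a local maximum of h restricted to the line {x + sN : |s| small}. -/

import Mathlib

open scoped RealInnerProductSpace
open Set Filter Topology

/-!
Along the normal line `s ↦ x + s • N` the derivative of `h` is
`φ s = ⟪∇h(x + s • N), N⟫`, which is `< 0` for small `s > 0` and `> 0` for small `s < 0`.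
Continuity of `∇h` forces `φ 0 = 0`, and the sign pattern makes `s ↦ h (x + s • N)`
increase up to `0` and decrease after it.
-/

theorem eq_zero_of_nonpos_right_of_nonneg_left {φ : ℝ → ℝ} {δ : ℝ} (hδ : 0 < δ)
    (hφ : ContinuousAt φ 0) (hright : ∀ t ∈ Ioo 0 δ, φ t ≤ 0)
    (hleft : ∀ t ∈ Ioo (-δ) 0, 0 ≤ φ t) : φ 0 = 0 :=
  le_antisymm
    (le_of_tendsto (hφ.tendsto.mono_left nhdsWithin_le_nhds)
      (eventually_of_mem (Ioo_mem_nhdsGT hδ) hright))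
    (ge_of_tendsto (hφ.tendsto.mono_left nhdsWithin_le_nhds)
      (eventually_of_mem (Ioo_mem_nhdsLT (neg_neg_iff_pos.2 hδ)) hleft))

theorem le_of_hasDerivAt_nonneg_left_of_nonpos_right {g g' : ℝ → ℝ} {δ : ℝ}
    (hg : ∀ t ∈ Ioo (-δ) δ, HasDerivAt g (g' t) t)
    (hleft : ∀ t ∈ Ioo (-δ) 0, 0 ≤ g' t) (hright : ∀ t ∈ Ioo 0 δ, g' t ≤ 0)
    {s : ℝ} (hs : |s| < δ) : g s ≤ g 0 := by
  obtain ⟨hs₁, hs₂⟩ := abs_lt.1 hs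
  have hcont : ∀ a b, -δ < a → b < δ → ContinuousOn g (Icc a b) := fun a b ha hb t ht =>
    (hg t ⟨ha.trans_le ht.1, ht.2.trans_lt hb⟩).continuousAt.continuousWithinAt
  rcases le_total s 0 with hs0 | hs0
  · have hmono : MonotoneOn g (Icc s 0) := by
      refine monotoneOn_of_hasDerivWithinAt_nonneg (f' := g') (convex_Icc s 0)
        (hcont s 0 hs₁ (by linarith)) (fun t ht => ?_) (fun t ht => ?_) <;>
        rw [interior_Icc] at ht
      · exact (hg t ⟨hs₁.trans ht.1, ht.2.trans (by linarith)⟩).hasDerivWithinAt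
      · exact hleft t ⟨hs₁.trans ht.1, ht.2⟩
    exact hmono ⟨le_rfl, hs0⟩ ⟨hs0, le_rfl⟩ hs0
  · have hanti : AntitoneOn g (Icc 0 s) := by
      refine antitoneOn_of_hasDerivWithinAt_nonpos (f' := g') (convex_Icc 0 s)
        (hcont 0 s (by linarith) hs₂) (fun t ht => ?_) (fun t ht => ?_) <;>
        rw [interior_Icc] at ht
      · exact (hg t ⟨(by linarith : -δ < 0).trans ht.1, ht.2.trans hs₂⟩).hasDerivWithinAt
      · exact hright t ⟨ht.1, ht.2.trans hs₂⟩
    exact hanti ⟨le_rfl, hs0⟩ ⟨hs0, le_rfl⟩ hs0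

section NormalLine

variable {F : Type*} [NormedAddCommGroup F] [InnerProductSpace ℝ F] [CompleteSpace F]
  {h : F → ℝ} (x N : F)

theorem DifferentiableAt.hasDerivAt_comp_add_smul {s : ℝ}
    (hh : DifferentiableAt ℝ h (x + s • N)) :
    HasDerivAt (fun t : ℝ => h (x + t • N)) ⟪gradient h (x + s • N), N⟫ s := by
  have hline : HasDerivAt (fun t : ℝ => x + t • N) N s := by
    simpa using ((hasDerivAt_id s).smul_const N).const_add x
  rw [inner_gradient_left]
  exact hh.hasFDerivAt.comp_hasDerivAt s hline

theorem ContDiff.continuous_inner_gradient_comp_add_smul (hh : ContDiff ℝ 1 h) :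
    Continuous fun t : ℝ => ⟪gradient h (x + t • N), N⟫ := by
  simp only [inner_gradient_left]
  exact (hh.continuous_fderiv one_ne_zero).comp (by fun_prop) |>.clm_apply continuous_const

end NormalLine

theorem stmt10_general (h : EuclideanSpace ℝ (Fin 2) → ℝ) (hh : ContDiff ℝ 1 h)
    (x N : EuclideanSpace ℝ (Fin 2))
    (V A₁ A₂ : Set (EuclideanSpace ℝ (Fin 2)))
    (hgrad₂ : ∀ y ∈ A₂ ∩ V, 0 < -⟪gradient h y, N⟫)
    (hgrad₁ : ∀ y ∈ A₁ ∩ V, -⟪gradient h y, N⟫ < 0)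
    (δ₀ : ℝ) (hδ₀ : 0 < δ₀)
    (hside : ∀ s : ℝ, 0 < s → s < δ₀ →
      x + s • N ∈ A₂ ∩ V ∧ x + (-s) • N ∈ A₁ ∩ V) :
    ⟪gradient h x, N⟫ = 0 ∧
    ∃ δ > 0, ∀ s : ℝ, |s| < δ → h (x + s • N) ≤ h x := by
  set φ : ℝ → ℝ := fun s => ⟪gradient h (x + s • N), N⟫
  have hright : ∀ t ∈ Ioo 0 δ₀, φ t ≤ 0 := fun t ht => by
    linarith [hgrad₂ _ (hside t ht.1 ht.2).1]
  have hleft : ∀ t ∈ Ioo (-δ₀) 0, 0 ≤ φ t := fun t ht => by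
    have := hgrad₁ _ (hside (-t) (by linarith [ht.2]) (by linarith [ht.1])).2
    rw [neg_neg] at this
    linarith
  refine ⟨?_, δ₀, hδ₀, fun s hs => ?_⟩
  · simpa [φ] using eq_zero_of_nonpos_right_of_nonneg_left hδ₀
      (hh.continuous_inner_gradient_comp_add_smul x N).continuousAt hright hleft
  · simpa using le_of_hasDerivAt_nonneg_left_of_nonpos_right
      (fun t _ => (hh.differentiable one_ne_zero _).hasDerivAt_comp_add_smul x N) hleft hright hs

/-- If h : ℝ² → ℝ is C¹, x is a common boundary point of open sets A₁, A₂
filling a neighborhood V of x on either side of a separating curve through x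
with normal N, and -∇h·N > 0 on A₂ ∩ V while -∇h·N < 0 on A₁ ∩ V, then
∇h(x)·N = 0 and x is a local maximum of h restricted to the normal line
{x + sN : |s| small}. -/
theorem stmt10 (h : EuclideanSpace ℝ (Fin 2) → ℝ) (hh : ContDiff ℝ 1 h)
    (x N : EuclideanSpace ℝ (Fin 2)) (hN : ‖N‖ = 1)
    (V A₁ A₂ : Set (EuclideanSpace ℝ (Fin 2))) (hV : V ∈ nhds x)
    (hA₁ : IsOpen A₁) (hA₂ : IsOpen A₂)
    (hxcl : x ∈ closure A₁ ∧ x ∈ closure A₂)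
    (hgrad₂ : ∀ y ∈ A₂ ∩ V, 0 < -⟪gradient h y, N⟫)
    (hgrad₁ : ∀ y ∈ A₁ ∩ V, -⟪gradient h y, N⟫ < 0)
    (δ₀ : ℝ) (hδ₀ : 0 < δ₀)
    (hside : ∀ s : ℝ, 0 < s → s < δ₀ →
      x + s • N ∈ A₂ ∩ V ∧ x + (-s) • N ∈ A₁ ∩ V) :
    ⟪gradient h x, N⟫ = 0 ∧
    ∃ δ > 0, ∀ s : ℝ, |s| < δ → h (x + s • N) ≤ h x :=
  stmt10_general h hh x N V A₁ A₂ hgrad₂ hgrad₁ δ₀ hδ₀ hside
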